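/- arXiv:2203.16340 — 2 statements merged into one kernel-verified Lean document; each statement's English description precedes it below -/
import Mathlib

section
/- Let f : ℝⁿ → ℝ be differentiable with L-Lipschitz continuous gradient (L > 0), let c > 0, ε > 0, and let x, p, d ∈ ℝⁿ satisfy d ≠ 0, ⟨∇f(x), p⟩ ≤ −c‖d‖², ‖p‖ ≤ ‖d‖, and ε/‖d‖_∞ ≤ c/L. Then, taking the step size α = ε/‖d‖_∞, one has f(x + αp) ≤ f(x) − (ε/‖d‖_∞)(c/2)‖d‖² ≤ f(x) − (εc/2)‖d‖. -/
/-!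
Along the segment `t ↦ x + t • v`, the Lipschitz bound on the gradient gives
`f (x + v) ≤ f x + ⟪∇f x, v⟫ + L/2 ‖v‖²`. For `v = α • p` the linear term is at most
`-α c ‖d‖²` and, as `α L ≤ c`, the quadratic one at most `α c/2 ‖d‖²`. The second inequality
reduces to `ε ≤ α ‖d‖`, that is, to `‖d‖_∞ ≤ ‖d‖`.
-/

open scoped RealInnerProductSpace

/-- The maximum (infinity) norm of a vector in `ℝⁿ`. -/
noncomputable def supNorm {n : ℕ} (v : Fin n → ℝ) : ℝ := ⨆ i, |v i|

theorem supNorm_eq_norm {n : ℕ} (v : Fin n → ℝ) : supNorm v = ‖v‖ :=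
  le_antisymm (Real.iSup_le (norm_le_pi_norm v) (norm_nonneg v))
    ((pi_norm_le_iff_of_nonneg (Real.iSup_nonneg fun i => abs_nonneg (v i))).2
      (le_ciSup (Set.finite_range _).bddAbove))

theorem supNorm_le_norm {n : ℕ} {p : ENNReal} [Fact (1 ≤ p)] (d : PiLp p fun _ : Fin n => ℝ) :
    supNorm (fun i => d i) ≤ ‖d‖ := by
  rw [supNorm_eq_norm]
  exact (pi_norm_le_iff_of_nonneg (norm_nonneg d)).2 fun i => PiLp.norm_apply_le d i

theorem supNorm_pos {n : ℕ} {p : ENNReal} {d : PiLp p fun _ : Fin n => ℝ} (hd : d ≠ 0) :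
    0 < supNorm (fun i => d i) := by
  rw [supNorm_eq_norm]
  exact norm_pos_iff.2 ((WithLp.ofLp_injective p).ne hd)

section Descent

variable {E : Type*} [NormedAddCommGroup E] [InnerProductSpace ℝ E] [CompleteSpace E]
  {f : E → ℝ} {L : ℝ}

theorem hasDerivAt_comp_add_smul_of_differentiableAt {x v : E} {t : ℝ}
    (hf : DifferentiableAt ℝ f (x + t • v)) :
    HasDerivAt (fun s : ℝ => f (x + s • v)) ⟪gradient f (x + t • v), v⟫ t := by
  have hline : HasDerivAt (fun s : ℝ => x + s • v) v t := by
    simpa using ((hasDerivAt_id t).smul_const v).const_add x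
  rw [inner_gradient_left]
  exact hf.hasFDerivAt.comp_hasDerivAt t hline

theorem le_add_inner_gradient_add_sq (hf : Differentiable ℝ f)
    (hlip : ∀ y z, ‖gradient f y - gradient f z‖ ≤ L * ‖y - z‖) (x v : E) :
    f (x + v) ≤ f x + ⟪gradient f x, v⟫ + L / 2 * ‖v‖ ^ 2 := by
  set g : ℝ → ℝ := fun t => f (x + t • v) - t * ⟪gradient f x, v⟫
  have hg : ∀ t, HasDerivAt g (⟪gradient f (x + t • v), v⟫ - ⟪gradient f x, v⟫) t := fun t =>
    (hasDerivAt_comp_add_smul_of_differentiableAt (hf _)).sub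
      (by simpa using (hasDerivAt_id t).mul_const ⟪gradient f x, v⟫)
  have hB : ∀ t, HasDerivAt (fun t : ℝ => g 0 + L / 2 * ‖v‖ ^ 2 * t ^ 2)
      (L * ‖v‖ ^ 2 * t) t := fun t =>
    (((hasDerivAt_pow 2 t).const_mul (L / 2 * ‖v‖ ^ 2)).const_add (g 0)).congr_deriv
      (by norm_num; ring)
  have bound : ∀ t ∈ Set.Ico (0 : ℝ) 1,
      ⟪gradient f (x + t • v), v⟫ - ⟪gradient f x, v⟫ ≤ L * ‖v‖ ^ 2 * t := by
    rintro t ⟨ht, -⟩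
    calc ⟪gradient f (x + t • v), v⟫ - ⟪gradient f x, v⟫
        = ⟪gradient f (x + t • v) - gradient f x, v⟫ := (inner_sub_left _ _ _).symm
      _ ≤ ‖gradient f (x + t • v) - gradient f x‖ * ‖v‖ := real_inner_le_norm _ _
      _ ≤ L * ‖(x + t • v) - x‖ * ‖v‖ := by gcongr; exact hlip _ _
      _ = L * ‖v‖ ^ 2 * t := by
        rw [add_sub_cancel_left, norm_smul, Real.norm_of_nonneg ht]; ring
  have := image_le_of_deriv_right_le_deriv_boundary
    (fun t _ => (hg t).continuousAt.continuousWithinAt)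
    (fun t _ => (hg t).hasDerivWithinAt) (by simp)
    (fun t _ => (hB t).continuousAt.continuousWithinAt)
    (fun t _ => (hB t).hasDerivWithinAt) bound (Set.right_mem_Icc.2 zero_le_one)
  simp only [g, one_smul, zero_smul, add_zero, one_mul, zero_mul, sub_zero, one_pow,
    mul_one] at this
  linarith

theorem le_sub_of_inner_gradient_le (hf : Differentiable ℝ f)
    (hlip : ∀ y z, ‖gradient f y - gradient f z‖ ≤ L * ‖y - z‖) {x p : E} {c r α : ℝ}
    (hc : 0 ≤ c) (hdesc : ⟪gradient f x, p⟫ ≤ -c * r ^ 2) (hp : ‖p‖ ≤ r)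
    (hα : 0 ≤ α) (hαL : α * L ≤ c) :
    f (x + α • p) ≤ f x - α * (c / 2) * r ^ 2 := by
  have hdescent := le_add_inner_gradient_add_sq hf hlip x (α • p)
  rw [real_inner_smul_right, norm_smul, Real.norm_of_nonneg hα] at hdescent
  have hp2 : ‖p‖ ^ 2 ≤ r ^ 2 := pow_le_pow_left₀ (norm_nonneg p) hp 2
  have hquad : L / 2 * (α * ‖p‖) ^ 2 ≤ α * (c / 2) * r ^ 2 := by
    calc L / 2 * (α * ‖p‖) ^ 2 = α * L * (α / 2 * ‖p‖ ^ 2) := by ring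
      _ ≤ c * (α / 2 * r ^ 2) := by gcongr
      _ = α * (c / 2) * r ^ 2 := by ring
  linarith [mul_le_mul_of_nonneg_left hdesc hα]

end Descent

theorem stmt7_general {n : ℕ} (f : EuclideanSpace ℝ (Fin n) → ℝ) (L c ε : ℝ)
    (hL : 0 < L) (hf : Differentiable ℝ f)
    (hlip : ∀ x y : EuclideanSpace ℝ (Fin n),
      ‖gradient f x - gradient f y‖ ≤ L * ‖x - y‖)
    (hc : 0 < c) (hε : 0 < ε) (x p d : EuclideanSpace ℝ (Fin n)) (hd : d ≠ 0)
    (hdesc : ⟪gradient f x, p⟫ ≤ -c * ‖d‖ ^ 2) (hpd : ‖p‖ ≤ ‖d‖)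
    (hstep : ε / supNorm (fun i => d i) ≤ c / L) :
    f (x + (ε / supNorm (fun i => d i)) • p) ≤
        f x - ε / supNorm (fun i => d i) * (c / 2) * ‖d‖ ^ 2 ∧
      f x - ε / supNorm (fun i => d i) * (c / 2) * ‖d‖ ^ 2 ≤
        f x - ε * c / 2 * ‖d‖ := by
  set s := supNorm (fun i => d i)
  have hs : 0 < s := supNorm_pos hd
  have hα : 0 ≤ ε / s := by positivity
  refine ⟨le_sub_of_inner_gradient_le hf hlip hc.le hdesc hpd hα ((le_div_iff₀ hL).1 hstep), ?_⟩
  have hεd : ε ≤ ε / s * ‖d‖ := by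
    calc ε = ε / s * s := (div_mul_cancel₀ ε hs.ne').symm
      _ ≤ ε / s * ‖d‖ := by gcongr; exact supNorm_le_norm d
  have := mul_le_mul_of_nonneg_right hεd (by positivity : 0 ≤ c / 2 * ‖d‖)
  linarith

theorem stmt7 {n : ℕ} (hn : 1 ≤ n) (f : EuclideanSpace ℝ (Fin n) → ℝ) (L c ε : ℝ)
    (hL : 0 < L) (hf : Differentiable ℝ f)
    (hlip : ∀ x y : EuclideanSpace ℝ (Fin n),
      ‖gradient f x - gradient f y‖ ≤ L * ‖x - y‖)
    (hc : 0 < c) (hε : 0 < ε) (x p d : EuclideanSpace ℝ (Fin n)) (hd : d ≠ 0)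
    (hdesc : ⟪gradient f x, p⟫ ≤ -c * ‖d‖ ^ 2) (hpd : ‖p‖ ≤ ‖d‖)
    (hstep : ε / supNorm (fun i => d i) ≤ c / L) :
    f (x + (ε / supNorm (fun i => d i)) • p) ≤
        f x - ε / supNorm (fun i => d i) * (c / 2) * ‖d‖ ^ 2 ∧
      f x - ε / supNorm (fun i => d i) * (c / 2) * ‖d‖ ^ 2 ≤
        f x - ε * c / 2 * ‖d‖ :=
  stmt7_general f L c ε hL hf hlip hc hε x p d hd hdesc hpd hstep
end

section
/- Let f : ℝⁿ → ℝ be differentiable with L-Lipschitz continuous gradient (L > 0), let ε > 0 and 0 < c ≤ C. Let x ∈ ℝⁿ, S ⊆ {1,…,n}, and let M be a symmetric real matrix indexed by S × S with c‖v‖² ≤ vᵀ M v ≤ C‖v‖² for all vectors v indexed by S. Let d ∈ ℝⁿ satisfy d_i = 0 for i ∉ S and M d[S] = −∇f(x)[S], assume d ≠ 0, and let p ∈ ℝⁿ satisfy ⟨∇f(x), p⟩ ≤ −c‖d‖² and |p_i| ≤ |d_i| for all i. If ‖∇f(x)[S]‖ ≥ ε, then for the step size α = min(c/L, ε/‖d‖_∞)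 one has f(x + αp) ≤ f(x) − min(c²ε²/(2LC²), ε²c/(2C)). -/
open scoped RealInnerProductSpace
open Matrix

/-!
By the descent lemma for an `L`-smooth `f`, a step `α • p` with `α L ≤ c` along a direction with
`⟪∇f x, p⟫ ≤ -c ‖d‖²` and `‖p‖ ≤ ‖d‖` decreases `f` by at least `(c/2) α ‖d‖²`. Since the
symmetric matrix `M` has spectrum in `[c, C]`, `ε ≤ ‖∇f(x)[S]‖ = ‖M d[S]‖ ≤ C ‖d‖`; together with
`‖d‖_∞ ≤ ‖d‖` this bounds `(c/2) α ‖d‖²` from below in both cases of the minimum defining `α`.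
-/

section Descent

variable {F : Type*} [NormedAddCommGroup F] [InnerProductSpace ℝ F] [CompleteSpace F]

/-- The descent lemma: `t ↦ f (x + t • v) - t ⟪∇f x, v⟫ - (L/2) t² ‖v‖²` is antitone on `[0, 1]`,
since the Lipschitz bound makes its derivative `⟪∇f (x + t • v) - ∇f x, v⟫ - L t ‖v‖²`
nonpositive for `t ≥ 0`. -/
theorem apply_add_le_of_lipschitz_gradient {f : F → ℝ} {L : ℝ} (hf : Differentiable ℝ f)
    (hlip : ∀ x y, ‖gradient f x - gradient f y‖ ≤ L * ‖x - y‖) (x v : F) :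
    f (x + v) ≤ f x + ⟪gradient f x, v⟫ + L / 2 * ‖v‖ ^ 2 := by
  set φ : ℝ → ℝ := fun t => f (x + t • v) - t * ⟪gradient f x, v⟫ - L / 2 * ‖v‖ ^ 2 * t ^ 2
  have hφ : ∀ t, HasDerivAt φ
      (⟪gradient f (x + t • v) - gradient f x, v⟫ - L * ‖v‖ ^ 2 * t) t := by
    intro t
    have hline : HasDerivAt (fun t : ℝ => x + t • v) v t := by
      simpa using ((hasDerivAt_id t).smul_const v).const_add x
    have hcomp := (hf (x + t • v)).hasFDerivAt.comp_hasDerivAt t hline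
    refine ((hcomp.sub ((hasDerivAt_id t).mul_const ⟪gradient f x, v⟫)).sub
      ((hasDerivAt_pow 2 t).const_mul (L / 2 * ‖v‖ ^ 2))).congr_deriv ?_
    rw [inner_sub_left, inner_gradient_left, inner_gradient_left]
    ring
  have hanti : AntitoneOn φ (Set.Icc 0 1) := by
    refine antitoneOn_of_deriv_nonpos (convex_Icc 0 1)
      (fun t _ => (hφ t).continuousAt.continuousWithinAt)
      (fun t _ => (hφ t).differentiableAt.differentiableWithinAt) fun t ht => ?_
    rw [interior_Icc] at ht
    rw [(hφ t).deriv, sub_nonpos]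
    calc ⟪gradient f (x + t • v) - gradient f x, v⟫
        ≤ ‖gradient f (x + t • v) - gradient f x‖ * ‖v‖ := real_inner_le_norm _ _
      _ ≤ L * ‖x + t • v - x‖ * ‖v‖ := by gcongr; exact hlip _ _
      _ = L * ‖v‖ ^ 2 * t := by
        rw [add_sub_cancel_left, norm_smul, Real.norm_of_nonneg ht.1.le]
        ring
  have h01 := hanti (Set.left_mem_Icc.2 zero_le_one) (Set.right_mem_Icc.2 zero_le_one)
    zero_le_one
  simp only [φ, one_smul, zero_smul, add_zero, one_mul, one_pow, mul_one, zero_mul, sub_zero,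
    ne_eq, OfNat.ofNat_ne_zero, not_false_eq_true, zero_pow, mul_zero] at h01
  linarith

theorem apply_add_smul_le_of_lipschitz_gradient {f : F → ℝ} {L c D α : ℝ}
    (hf : Differentiable ℝ f)
    (hlip : ∀ x y, ‖gradient f x - gradient f y‖ ≤ L * ‖x - y‖) {x p : F}
    (hdesc : ⟪gradient f x, p⟫ ≤ -c * D ^ 2) (hpD : ‖p‖ ≤ D) (hL : 0 ≤ L) (hα : 0 ≤ α)
    (hαL : α * L ≤ c) :
    f (x + α • p) ≤ f x - c / 2 * α * D ^ 2 := by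
  have hdescent := apply_add_le_of_lipschitz_gradient hf hlip x (α • p)
  rw [real_inner_smul_right, norm_smul, Real.norm_of_nonneg hα] at hdescent
  have hp2 : ‖p‖ ^ 2 ≤ D ^ 2 := pow_le_pow_left₀ (norm_nonneg p) hpD 2
  calc f (x + α • p) ≤ f x + α * ⟪gradient f x, p⟫ + L / 2 * (α * ‖p‖) ^ 2 := hdescent
    _ ≤ f x + α * (-c * D ^ 2) + L / 2 * (α ^ 2 * D ^ 2) := by
      rw [mul_pow]; gcongr
    _ ≤ f x - c / 2 * α * D ^ 2 := by
      nlinarith [mul_le_mul_of_nonneg_right hαL (mul_nonneg hα (sq_nonneg D))]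

end Descent
theorem Matrix.PosSemidef.dotProduct_mulVec_sq_le {ι : Type*} [Fintype ι] {M : Matrix ι ι ℝ}
    (hM : M.PosSemidef) (u w : ι → ℝ) :
    (u ⬝ᵥ M *ᵥ w) ^ 2 ≤ (u ⬝ᵥ M *ᵥ u) * (w ⬝ᵥ M *ᵥ w) := by
  let _ := M.toSeminormedAddCommGroup hM
  let _ := M.toInnerProductSpace hM
  have hinner : ∀ x y : ι → ℝ, ⟪x, y⟫ = x ⬝ᵥ M *ᵥ y := fun x y => by
    change (M *ᵥ y) ⬝ᵥ star x = _
    rw [star_trivial, dotProduct_comm]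
  simpa only [sq, hinner] using real_inner_mul_inner_self_le u w

/-- With `w = M v`, Cauchy–Schwarz for the form of `M` gives
`‖w‖⁴ = (v ⬝ M w)² ≤ (v ⬝ M v) (w ⬝ M w) ≤ C ‖v‖² · C ‖w‖²`. -/
theorem Matrix.PosSemidef.sum_mulVec_sq_le {ι : Type*} [Fintype ι] {M : Matrix ι ι ℝ}
    (hM : M.PosSemidef) {C : ℝ} (hC : ∀ v : ι → ℝ, v ⬝ᵥ M *ᵥ v ≤ C * ∑ i, v i ^ 2)
    (v : ι → ℝ) : ∑ i, (M *ᵥ v) i ^ 2 ≤ C ^ 2 * ∑ i, v i ^ 2 := by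
  set w := M *ᵥ v
  have hsymm : Mᵀ = M := (isHermitian_iff_isSymm.1 hM.isHermitian).eq
  have hww : ∑ i, w i ^ 2 = v ⬝ᵥ M *ᵥ w := by
    rw [dotProduct_mulVec, ← hsymm, vecMul_transpose]
    simp only [dotProduct, w, sq]
  have hv := hC v
  have hw : w ⬝ᵥ M *ᵥ w ≤ C * ∑ i, w i ^ 2 := hC w
  have hv0 : 0 ≤ v ⬝ᵥ M *ᵥ v := by simpa using hM.dotProduct_mulVec_nonneg v
  have hw0 : 0 ≤ w ⬝ᵥ M *ᵥ w := by simpa using hM.dotProduct_mulVec_nonneg w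
  have hcs : (∑ i, w i ^ 2) * ∑ i, w i ^ 2 ≤ (C ^ 2 * ∑ i, v i ^ 2) * ∑ i, w i ^ 2 := by
    calc (∑ i, w i ^ 2) * ∑ i, w i ^ 2 = (v ⬝ᵥ M *ᵥ w) ^ 2 := by rw [hww, sq]
      _ ≤ (v ⬝ᵥ M *ᵥ v) * (w ⬝ᵥ M *ᵥ w) := hM.dotProduct_mulVec_sq_le v w
      _ ≤ (C * ∑ i, v i ^ 2) * (C * ∑ i, w i ^ 2) := mul_le_mul hv hw hw0 (hv0.trans hv)
      _ = _ := by ring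
  rcases (Finset.sum_nonneg fun i _ => sq_nonneg (w i)).eq_or_lt with hzero | hpos
  · rw [← hzero]
    positivity
  · exact le_of_mul_le_mul_right hcs hpos

theorem sum_sq_le_of_mulVec_eq_neg {ι : Type*} {S : Finset ι} {M : Matrix S S ℝ}
    (hM : M.PosSemidef) {C : ℝ} (hC : ∀ v : S → ℝ, v ⬝ᵥ M *ᵥ v ≤ C * ∑ i, v i ^ 2)
    {d g : ι → ℝ} (heq : M *ᵥ (fun i : S => d i) = fun i : S => -g i) :
    ∑ i ∈ S, g i ^ 2 ≤ C ^ 2 * ∑ i ∈ S, d i ^ 2 := by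
  have := hM.sum_mulVec_sq_le hC (fun i : S => d i)
  rw [heq] at this
  simpa only [neg_sq, Finset.sum_coe_sort S (fun i => g i ^ 2),
    Finset.sum_coe_sort S (fun i => d i ^ 2)] using this

theorem EuclideanSpace.norm_sq_eq_sum_of_support_subset {ι : Type*} [Fintype ι]
    {S : Finset ι} {d : EuclideanSpace ℝ ι} (hd : ∀ i ∉ S, d i = 0) :
    ‖d‖ ^ 2 = ∑ i ∈ S, d i ^ 2 := by
  rw [EuclideanSpace.norm_sq_eq, ← Finset.sum_subset (Finset.subset_univ S)
    fun i _ hi => by simp [hd i hi]]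
  simp only [Real.norm_eq_abs, sq_abs]

theorem EuclideanSpace.norm_le_norm_of_abs_le {ι : Type*} [Fintype ι]
    {p d : EuclideanSpace ℝ ι} (h : ∀ i, |p i| ≤ |d i|) : ‖p‖ ≤ ‖d‖ := by
  rw [EuclideanSpace.norm_eq, EuclideanSpace.norm_eq]
  gcongr with i
  exact h i

theorem abs_le_supNorm {n : ℕ} (v : Fin n → ℝ) (i : Fin n) : |v i| ≤ supNorm v :=
  le_ciSup (f := fun i => |v i|) (Set.finite_range _).bddAbove i

theorem supNorm_pos_s8 {n : ℕ} {v : Fin n → ℝ} (hv : v ≠ 0) : 0 < supNorm v := by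
  obtain ⟨i, hi⟩ := Function.ne_iff.1 hv
  exact (abs_pos.2 hi).trans_le (abs_le_supNorm v i)

theorem supNorm_le_norm_s8 {n : ℕ} (v : EuclideanSpace ℝ (Fin n)) : supNorm v.ofLp ≤ ‖v‖ :=
  Real.iSup_le (fun i => PiLp.norm_apply_le v i) (norm_nonneg v)

theorem min_le_half_mul_min_mul_sq {L ε c C m D : ℝ} (hL : 0 < L) (hε : 0 ≤ ε) (hc : 0 ≤ c)
    (hC : 0 < C) (hm : 0 < m) (hmD : m ≤ D) (hεD : ε ≤ C * D) :
    min (c ^ 2 * ε ^ 2 / (2 * L * C ^ 2)) (ε ^ 2 * c / (2 * C)) ≤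
      c / 2 * min (c / L) (ε / m) * D ^ 2 := by
  have hD : 0 < D := hm.trans_le hmD
  rw [mul_min_of_nonneg _ _ (by positivity), min_mul_of_nonneg _ _ (sq_nonneg D)]
  refine min_le_min ?_ ?_
  · calc c ^ 2 * ε ^ 2 / (2 * L * C ^ 2) ≤ c ^ 2 * (C * D) ^ 2 / (2 * L * C ^ 2) := by gcongr
      _ = c / 2 * (c / L) * D ^ 2 := by field_simp
  · calc ε ^ 2 * c / (2 * C) = c / 2 * ε * (ε / C) := by field_simp
      _ ≤ c / 2 * ε * D := by gcongr; rwa [div_le_iff₀ hC, mul_comm]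
      _ = c / 2 * (ε / D) * D ^ 2 := by field_simp
      _ ≤ c / 2 * (ε / m) * D ^ 2 := by gcongr

theorem stmt8_general {n : ℕ} (f : EuclideanSpace ℝ (Fin n) → ℝ) (L ε c C : ℝ)
    (hL : 0 < L) (hf : Differentiable ℝ f)
    (hlip : ∀ x y : EuclideanSpace ℝ (Fin n),
      ‖gradient f x - gradient f y‖ ≤ L * ‖x - y‖)
    (hε : 0 < ε) (hc : 0 < c) (hcC : c ≤ C)
    (x : EuclideanSpace ℝ (Fin n)) (S : Finset (Fin n)) (M : Matrix S S ℝ)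
    (hsymm : M.IsSymm)
    (hlb : ∀ v : S → ℝ, c * (∑ i, v i ^ 2) ≤ v ⬝ᵥ M.mulVec v)
    (hub : ∀ v : S → ℝ, v ⬝ᵥ M.mulVec v ≤ C * (∑ i, v i ^ 2))
    (d : EuclideanSpace ℝ (Fin n)) (hd0 : ∀ i, i ∉ S → d i = 0)
    (heq : M.mulVec (fun i : S => d i) = fun i : S => -(gradient f x i))
    (hd : d ≠ 0) (p : EuclideanSpace ℝ (Fin n))
    (hdesc : ⟪gradient f x, p⟫ ≤ -c * ‖d‖ ^ 2)
    (hpd : ∀ i, |p i| ≤ |d i|)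
    (hgrad : ε ≤ Real.sqrt (∑ i ∈ S, gradient f x i ^ 2)) :
    f (x + min (c / L) (ε / supNorm (fun i => d i)) • p) ≤
      f x - min (c ^ 2 * ε ^ 2 / (2 * L * C ^ 2)) (ε ^ 2 * c / (2 * C)) := by
  have hC : 0 < C := hc.trans_le hcC
  have hM : M.PosSemidef := .of_dotProduct_mulVec_nonneg (isHermitian_iff_isSymm.2 hsymm)
    fun v => by simpa using (by positivity : 0 ≤ c * ∑ i, v i ^ 2).trans (hlb v)
  have hεd : ε ≤ C * ‖d‖ := hgrad.trans <| Real.sqrt_le_iff.2 ⟨by positivity, by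
    rw [mul_pow, EuclideanSpace.norm_sq_eq_sum_of_support_subset hd0]
    exact sum_sq_le_of_mulVec_eq_neg hM hub heq⟩
  have hm : 0 < supNorm d.ofLp := supNorm_pos_s8 (WithLp.ofLp_injective 2 |>.ne_iff.2 hd)
  have hαL : min (c / L) (ε / supNorm d.ofLp) * L ≤ c :=
    (le_div_iff₀ hL).1 (min_le_left _ _)
  calc _ ≤ f x - c / 2 * min (c / L) (ε / supNorm d.ofLp) * ‖d‖ ^ 2 :=
        apply_add_smul_le_of_lipschitz_gradient hf hlip hdesc
          (EuclideanSpace.norm_le_norm_of_abs_le hpd) hL.le (by positivity) hαL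
    _ ≤ _ := sub_le_sub_left (min_le_half_mul_min_mul_sq hL hε.le hc.le hC hm
        (supNorm_le_norm_s8 d) hεd) _

theorem stmt8 {n : ℕ} (hn : 1 ≤ n) (f : EuclideanSpace ℝ (Fin n) → ℝ) (L ε c C : ℝ)
    (hL : 0 < L) (hf : Differentiable ℝ f)
    (hlip : ∀ x y : EuclideanSpace ℝ (Fin n),
      ‖gradient f x - gradient f y‖ ≤ L * ‖x - y‖)
    (hε : 0 < ε) (hc : 0 < c) (hcC : c ≤ C)
    (x : EuclideanSpace ℝ (Fin n)) (S : Finset (Fin n)) (M : Matrix S S ℝ)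
    (hsymm : M.IsSymm)
    (hlb : ∀ v : S → ℝ, c * (∑ i, v i ^ 2) ≤ v ⬝ᵥ M.mulVec v)
    (hub : ∀ v : S → ℝ, v ⬝ᵥ M.mulVec v ≤ C * (∑ i, v i ^ 2))
    (d : EuclideanSpace ℝ (Fin n)) (hd0 : ∀ i, i ∉ S → d i = 0)
    (heq : M.mulVec (fun i : S => d i) = fun i : S => -(gradient f x i))
    (hd : d ≠ 0) (p : EuclideanSpace ℝ (Fin n))
    (hdesc : ⟪gradient f x, p⟫ ≤ -c * ‖d‖ ^ 2)
    (hpd : ∀ i, |p i| ≤ |d i|)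
    (hgrad : ε ≤ Real.sqrt (∑ i ∈ S, gradient f x i ^ 2)) :
    f (x + min (c / L) (ε / supNorm (fun i => d i)) • p) ≤
      f x - min (c ^ 2 * ε ^ 2 / (2 * L * C ^ 2)) (ε ^ 2 * c / (2 * C)) :=
  stmt8_general f L ε c C hL hf hlip hε hc hcC x S M hsymm hlb hub d hd0 heq hd p hdesc hpd hgrad
end
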